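/- arXiv:1312.3621 — 2 statements merged into one kernel-verified Lean document; each statement's English description precedes it below -/
import Mathlib

section
/- Let λ₀ ∈ ℝ. Suppose F : ℝ → ℂ^{N×N} is twice continuously differentiable on [0,1], satisfies −F'' + V(x)F = λ₀F on [0,1], F(0) = T₋^⊥ and F'(0) = T₋ + aT₋^⊥; and suppose G : ℝ → ℂ^{N×N} is twice continuously differentiable on [0,1], satisfies −G'' + V(x)G = λ₀G + F on [0,1] with G(0) = G'(0) = 0. Let P be the orthogonal projector onto Ker(Γ₊F) = {h ∈ ℂ^N : (Γ₊F)·h = 0}. Then P·(∫₀¹ F(x)ᴴF(x) dx)·P = −P·(Γ₊G)ᴴ·(Γ₊°F)·P. -/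
open Matrix Set

/-!
Since `V` is Hermitian and `λ₀` is real, the equations for `F` and `G` give
`G''ᴴ F - Gᴴ F'' = -FᴴF`, so Green's formula and `G(0) = G'(0) = 0` yield
`∫₀¹ FᴴF = (Gᴴ F' - G'ᴴ F)(1)`. The boundary operators satisfy the Lagrange identity
`(Γ₊G)ᴴ Γ₊°F - (Γ₊°G)ᴴ Γ₊F = G'ᴴ F - Gᴴ F'` at `1`, and `Γ₊F · P = 0` kills the second term.
-/

section BoundaryForm

variable {R : Type*} [Ring R] [StarRing R]

-- `Γ₊ψ` and `Γ₊°ψ`, with `y = ψ(1)` and `y' = ψ'(1)`.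
def boundaryValue (T b y y' : R) : R := (1 - T) * (y' + b * y) - T * y

def dualBoundaryValue (T y y' : R) : R := (1 - T) * y + T * y'

theorem star_boundaryValue_mul_dualBoundaryValue_sub {T b : R} (hT : IsStarProjection T)
    (hbH : IsSelfAdjoint b) (hb : b = (1 - T) * b * (1 - T)) (g g' f f' : R) :
    star (boundaryValue T b g g') * dualBoundaryValue T f f'
      - star (dualBoundaryValue T g g') * boundaryValue T b f f' = star g' * f - star g * f' := by
  have hTT : T * T = T := hT.isIdempotentElem
  have hQQ : (1 - T) * (1 - T) = 1 - T := hT.isIdempotentElem.one_sub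
  have hQT : (1 - T) * T = 0 := hT.one_sub_mul_self
  have hTQ : T * (1 - T) = 0 := hT.mul_one_sub_self
  have hQb : (1 - T) * b = b := by
    conv_lhs => rw [hb, ← mul_assoc, ← mul_assoc, hQQ, ← hb]
  have hbQ : b * (1 - T) = b := by
    conv_lhs => rw [hb, mul_assoc, hQQ, ← hb]
  have hbT : b * T = 0 := by
    rw [← hbQ, mul_assoc, hQT, mul_zero]
  have hstar : star (boundaryValue T b g g') = star g' * (1 - T) + star g * b - star g * T := by
    simp only [boundaryValue, star_sub, star_add, star_mul, star_one, hT.isSelfAdjoint.star_eq,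
      hbH.star_eq]
    rw [add_mul, mul_assoc, hbQ]
  have hstarDual : star (dualBoundaryValue T g g') = star g * (1 - T) + star g' * T := by
    simp only [dualBoundaryValue, star_add, star_mul, star_sub, star_one,
      hT.isSelfAdjoint.star_eq]
  have hQdual : (1 - T) * dualBoundaryValue T f f' = (1 - T) * f := by
    rw [dualBoundaryValue, mul_add, ← mul_assoc, ← mul_assoc, hQQ, hQT, zero_mul, add_zero]
  have hTdual : T * dualBoundaryValue T f f' = T * f' := by
    rw [dualBoundaryValue, mul_add, ← mul_assoc, ← mul_assoc, hTQ, hTT, zero_mul, zero_add]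
  have hbdual : b * dualBoundaryValue T f f' = b * f := by
    rw [dualBoundaryValue, mul_add, ← mul_assoc, ← mul_assoc, hbQ, hbT, zero_mul, add_zero]
  have hQbdry : (1 - T) * boundaryValue T b f f' = (1 - T) * f' + b * f := by
    rw [boundaryValue, mul_sub, ← mul_assoc, ← mul_assoc, hQQ, hQT, zero_mul, sub_zero, mul_add,
      ← mul_assoc, hQb]
  have hTbdry : T * boundaryValue T b f f' = -(T * f) := by
    rw [boundaryValue, mul_sub, ← mul_assoc, ← mul_assoc, hTQ, hTT, zero_mul, zero_sub]
  calc star (boundaryValue T b g g') * dualBoundaryValue T f f'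
        - star (dualBoundaryValue T g g') * boundaryValue T b f f'
      = star g' * ((1 - T) * dualBoundaryValue T f f') + star g * (b * dualBoundaryValue T f f')
          - star g * (T * dualBoundaryValue T f f')
        - (star g * ((1 - T) * boundaryValue T b f f')
          + star g' * (T * boundaryValue T b f f')) := by
        rw [hstar, hstarDual]; noncomm_ring
    _ = star g' * f - star g * f' := by
        rw [hQdual, hbdual, hTdual, hQbdry, hTbdry]; noncomm_ring

end BoundaryForm

theorem star_mul_sub_star_mul_of_schrodinger {R : Type*} [Ring R] [StarRing R] [Algebra ℝ R]
    [StarModule ℝ R] {V F F'' G G'' H : R} {μ : ℝ} (hV : IsSelfAdjoint V)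
    (hF : -F'' + V * F = μ • F) (hG : -G'' + V * G = μ • G + H) :
    star G'' * F - star G * F'' = -(star H * F) := by
  have hF'' : F'' = V * F - μ • F := by rw [← hF]; abel
  have hG'' : G'' = V * G - (μ • G + H) := by rw [← hG]; abel
  rw [hF'', hG'']
  simp only [star_sub, star_add, star_mul, star_smul, hV.star_eq, star_trivial, sub_mul, mul_sub,
    add_mul, smul_mul_assoc, mul_smul_comm, mul_assoc]
  abel

theorem Matrix.mul_eq_zero_of_forall_mulVec_eq_self {m n α : Type*} [Fintype n]
    [Semiring α] {M : Matrix m n α} {P : Matrix n n α} (hP : P * P = P)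
    (h : ∀ v, P *ᵥ v = v → M *ᵥ v = 0) : M * P = 0 :=
  mulVec_injective <| funext fun v => by
    rw [Matrix.zero_mulVec, ← mulVec_mulVec]
    exact h _ (by rw [mulVec_mulVec, hP])

section Wronskian

variable {l m n 𝕜 : Type*} [Fintype m] [RCLike 𝕜]

theorem hasDerivAt_conjTranspose_mul_apply {u : ℝ → Matrix m l 𝕜} {v : ℝ → Matrix m n 𝕜}
    {u' : Matrix m l 𝕜} {v' : Matrix m n 𝕜} {x : ℝ}
    (hu : ∀ i j, HasDerivAt (fun t => u t i j) (u' i j) x)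
    (hv : ∀ i j, HasDerivAt (fun t => v t i j) (v' i j) x) (i : l) (j : n) :
    HasDerivAt (fun t => ((u t)ᴴ * v t) i j) ((u'ᴴ * v x + (u x)ᴴ * v') i j) x := by
  simp only [Matrix.add_apply, mul_apply, conjTranspose_apply, ← Finset.sum_add_distrib]
  exact HasDerivAt.fun_sum fun k _ => (hu k i).star.fun_mul (hv k j)

theorem continuousOn_conjTranspose_mul_apply {u : ℝ → Matrix m l 𝕜} {v : ℝ → Matrix m n 𝕜}
    {s : Set ℝ} (hu : ∀ i j, ContinuousOn (fun t => u t i j) s)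
    (hv : ∀ i j, ContinuousOn (fun t => v t i j) s) (i : l) (j : n) :
    ContinuousOn (fun t => ((u t)ᴴ * v t) i j) s := by
  simp only [mul_apply, conjTranspose_apply]
  exact continuousOn_finsetSum _ fun k _ => (hu k i).star.mul (hv k j)

theorem integral_conjTranspose_mul_sub_eq_wronskian_sub {g g' g'' : ℝ → Matrix m l 𝕜}
    {f f' f'' : ℝ → Matrix m n 𝕜} {a b : ℝ} (hab : a ≤ b)
    (hg : ∀ x ∈ Icc a b, ∀ i j, HasDerivAt (fun t => g t i j) (g' x i j) x)
    (hg' : ∀ x ∈ Icc a b, ∀ i j, HasDerivAt (fun t => g' t i j) (g'' x i j) x)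
    (hf : ∀ x ∈ Icc a b, ∀ i j, HasDerivAt (fun t => f t i j) (f' x i j) x)
    (hf' : ∀ x ∈ Icc a b, ∀ i j, HasDerivAt (fun t => f' t i j) (f'' x i j) x)
    (hg''c : ∀ i j, ContinuousOn (fun x => g'' x i j) (Icc a b))
    (hf''c : ∀ i j, ContinuousOn (fun x => f'' x i j) (Icc a b)) :
    (of fun i j => ∫ x in a..b, ((g'' x)ᴴ * f x - (g x)ᴴ * f'' x) i j) =
      ((g' b)ᴴ * f b - (g b)ᴴ * f' b) - ((g' a)ᴴ * f a - (g a)ᴴ * f' a) := by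
  ext i j
  rw [of_apply]
  refine intervalIntegral.integral_eq_sub_of_hasDerivAt
    (f := fun t => ((g' t)ᴴ * f t) i j - ((g t)ᴴ * f' t) i j) (fun x hx => ?_) ?_
  · rw [uIcc_of_le hab] at hx
    convert (hasDerivAt_conjTranspose_mul_apply (hg' x hx) (hf x hx) i j).fun_sub
      (hasDerivAt_conjTranspose_mul_apply (hg x hx) (hf' x hx) i j) using 1
    rw [Matrix.sub_apply, Matrix.add_apply, Matrix.add_apply]
    abel
  · refine ContinuousOn.intervalIntegrable ?_
    rw [uIcc_of_le hab]
    exact (continuousOn_conjTranspose_mul_apply hg''c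
      (fun i j x hx => (hf x hx i j).continuousAt.continuousWithinAt) i j).sub
      (continuousOn_conjTranspose_mul_apply
      (fun i j x hx => (hg x hx i j).continuousAt.continuousWithinAt) hf''c i j)

end Wronskian

theorem gram_matrix_formula_general {N : ℕ}
    (Tp b : Matrix (Fin N) (Fin N) ℂ)
    (hTpH : Tpᴴ = Tp) (hTp2 : Tp * Tp = Tp)
    (hbH : bᴴ = b) (hb : b = (1 - Tp) * b * (1 - Tp))
    (V : ℝ → Matrix (Fin N) (Fin N) ℂ)
    (hVh : ∀ x ∈ Icc (0:ℝ) 1, (V x)ᴴ = V x)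
    (lam0 : ℝ)
    (F F' F'' G G' G'' : ℝ → Matrix (Fin N) (Fin N) ℂ)
    (hF' : ∀ x ∈ Icc (0:ℝ) 1, ∀ i j, HasDerivAt (fun t => F t i j) (F' x i j) x)
    (hF'' : ∀ x ∈ Icc (0:ℝ) 1, ∀ i j, HasDerivAt (fun t => F' t i j) (F'' x i j) x)
    (hF''c : ∀ i j, ContinuousOn (fun x => F'' x i j) (Icc (0:ℝ) 1))
    (hFeq : ∀ x ∈ Icc (0:ℝ) 1, -F'' x + V x * F x = (lam0 : ℂ) • F x)
    (hG' : ∀ x ∈ Icc (0:ℝ) 1, ∀ i j, HasDerivAt (fun t => G t i j) (G' x i j) x)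
    (hG'' : ∀ x ∈ Icc (0:ℝ) 1, ∀ i j, HasDerivAt (fun t => G' t i j) (G'' x i j) x)
    (hG''c : ∀ i j, ContinuousOn (fun x => G'' x i j) (Icc (0:ℝ) 1))
    (hGeq : ∀ x ∈ Icc (0:ℝ) 1, -G'' x + V x * G x = (lam0 : ℂ) • G x + F x)
    (hG0 : G 0 = 0) (hG'0 : G' 0 = 0)
    (P : Matrix (Fin N) (Fin N) ℂ) (hP2 : P * P = P)
    (hPker : ∀ v : Fin N → ℂ,
      ((1 - Tp) * (F' 1 + b * F 1) - Tp * F 1) *ᵥ v = 0 ↔ P *ᵥ v = v) :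
    P * (Matrix.of fun i j => ∫ x in (0:ℝ)..1, ((F x)ᴴ * F x) i j) * P =
      -(P * ((1 - Tp) * (G' 1 + b * G 1) - Tp * G 1)ᴴ *
          ((1 - Tp) * F 1 + Tp * F' 1) * P) := by
  have hwronskian : ∀ x ∈ Icc (0:ℝ) 1, (G'' x)ᴴ * F x - (G x)ᴴ * F'' x = -((F x)ᴴ * F x) :=
    fun x hx => star_mul_sub_star_mul_of_schrodinger (hVh x hx)
      (by simpa only [Complex.coe_smul] using hFeq x hx)
      (by simpa only [Complex.coe_smul] using hGeq x hx)
  have hgram : (Matrix.of fun i j => ∫ x in (0:ℝ)..1, ((F x)ᴴ * F x) i j)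
      = -((G' 1)ᴴ * F 1 - (G 1)ᴴ * F' 1) := by
    have hgreen := integral_conjTranspose_mul_sub_eq_wronskian_sub zero_le_one hG' hG'' hF' hF''
      hG''c hF''c
    simp only [hG0, hG'0, conjTranspose_zero, Matrix.zero_mul, sub_zero] at hgreen
    ext i j
    rw [← hgreen, Matrix.neg_apply, of_apply, of_apply, ← intervalIntegral.integral_neg]
    refine intervalIntegral.integral_congr fun x hx => ?_
    rw [hwronskian x (by rwa [uIcc_of_le zero_le_one] at hx), Matrix.neg_apply, neg_neg]
  have hkernel : boundaryValue Tp b (F 1) (F' 1) * P = 0 :=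
    mul_eq_zero_of_forall_mulVec_eq_self hP2 fun v => (hPker v).mpr
  have hboundary := star_boundaryValue_mul_dualBoundaryValue_sub ⟨hTp2, hTpH⟩ hbH hb
    (G 1) (G' 1) (F 1) (F' 1)
  simp only [star_eq_conjTranspose] at hboundary
  change _ = -(P * (boundaryValue Tp b (G 1) (G' 1))ᴴ * dualBoundaryValue Tp (F 1) (F' 1) * P)
  rw [hgram, ← hboundary]
  simp only [Matrix.mul_neg, Matrix.neg_mul, Matrix.mul_sub, Matrix.sub_mul, Matrix.mul_assoc,
    hkernel, Matrix.mul_zero, sub_zero]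

/-- With `F` the fundamental solution at `λ₀` (boundary data at `0`) and
`G = ∂F/∂λ` (i.e. `-G'' + VG = λ₀G + F`, `G(0) = G'(0) = 0`), and `P` the orthogonal
projector onto `Ker(Γ₊F)`, one has `P (∫₀¹ FᴴF) P = -P (Γ₊G)ᴴ (Γ₊°F) P`. -/
theorem gram_matrix_formula {N : ℕ} (hN : 1 ≤ N)
    (Tm Tp a b : Matrix (Fin N) (Fin N) ℂ)
    (hTmH : Tmᴴ = Tm) (hTm2 : Tm * Tm = Tm) (hTpH : Tpᴴ = Tp) (hTp2 : Tp * Tp = Tp)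
    (haH : aᴴ = a) (ha : a = (1 - Tm) * a * (1 - Tm))
    (hbH : bᴴ = b) (hb : b = (1 - Tp) * b * (1 - Tp))
    (V : ℝ → Matrix (Fin N) (Fin N) ℂ)
    (hVc : ∀ i j, Continuous fun x => V x i j)
    (hVh : ∀ x ∈ Icc (0:ℝ) 1, (V x)ᴴ = V x)
    (lam0 : ℝ)
    (F F' F'' G G' G'' : ℝ → Matrix (Fin N) (Fin N) ℂ)
    (hF' : ∀ x ∈ Icc (0:ℝ) 1, ∀ i j, HasDerivAt (fun t => F t i j) (F' x i j) x)
    (hF'' : ∀ x ∈ Icc (0:ℝ) 1, ∀ i j, HasDerivAt (fun t => F' t i j) (F'' x i j) x)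
    (hF''c : ∀ i j, ContinuousOn (fun x => F'' x i j) (Icc (0:ℝ) 1))
    (hFeq : ∀ x ∈ Icc (0:ℝ) 1, -F'' x + V x * F x = (lam0 : ℂ) • F x)
    (hF0 : F 0 = 1 - Tm) (hF'0 : F' 0 = Tm + a * (1 - Tm))
    (hG' : ∀ x ∈ Icc (0:ℝ) 1, ∀ i j, HasDerivAt (fun t => G t i j) (G' x i j) x)
    (hG'' : ∀ x ∈ Icc (0:ℝ) 1, ∀ i j, HasDerivAt (fun t => G' t i j) (G'' x i j) x)
    (hG''c : ∀ i j, ContinuousOn (fun x => G'' x i j) (Icc (0:ℝ) 1))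
    (hGeq : ∀ x ∈ Icc (0:ℝ) 1, -G'' x + V x * G x = (lam0 : ℂ) • G x + F x)
    (hG0 : G 0 = 0) (hG'0 : G' 0 = 0)
    (P : Matrix (Fin N) (Fin N) ℂ) (hPH : Pᴴ = P) (hP2 : P * P = P)
    (hPker : ∀ v : Fin N → ℂ,
      ((1 - Tp) * (F' 1 + b * F 1) - Tp * F 1) *ᵥ v = 0 ↔ P *ᵥ v = v) :
    P * (Matrix.of fun i j => ∫ x in (0:ℝ)..1, ((F x)ᴴ * F x) i j) * P =
      -(P * ((1 - Tp) * (G' 1 + b * G 1) - Tp * G 1)ᴴ *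
          ((1 - Tp) * F 1 + Tp * F' 1) * P) :=
  gram_matrix_formula_general Tp b hTpH hTp2 hbH hb V hVh lam0 F F' F'' G G' G'' hF' hF'' hF''c hFeq
    hG' hG'' hG''c hGeq hG0 hG'0 P hP2 hPker
end

section
/- Suppose for every λ ∈ ℂ the function F₊(·,λ) : ℝ → ℂ^{N×N} is twice continuously differentiable on [0,1] and satisfies −F'' + V(x)F = λF on [0,1] with F₊(1,λ) = T₊^⊥ and F₊'(1,λ) = T₊ − bT₊^⊥. Then for every λ ∈ ℂ: (Γ₋°F₊(·,conj λ))ᴴ·(Γ₋F₊(·,λ)) = (Γ₋F₊(·,conj λ))ᴴ·(Γ₋°F₊(·,λ)). Consequently, whenever the matrices Γ₋F₊(·,λ) and Γ₋F₊(·,conj λ) are invertible, the Weyl–Titchmarsh function m(λ) = −(Γ₋°F₊(·,λ))·(Γ₋F₊(·,λ))⁻¹ satisfies m(conj λ) = m(λ)ᴴ. -/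
open Matrix Set

/-!
Because `V` is Hermitian, the Wronskian `F₊(x, λ̄)ᴴ F₊'(x, λ) - F₊'(x, λ̄)ᴴ F₊(x, λ)` has zero
derivative, so it is constant on `[0, 1]`; the normalization at `x = 1` makes it vanish there.
At `x = 0` Green's formula for the boundary maps rewrites it as
`(Γ₋°F₊(·, λ̄))ᴴ Γ₋F₊(·, λ) - (Γ₋F₊(·, λ̄))ᴴ Γ₋°F₊(·, λ)`, which is the first claim; the symmetry
of `m` follows by multiplying it by the inverses of `(Γ₋F₊(·, λ))ᴴ` and `Γ₋F₊(·, λ̄)`.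
-/

section BoundaryForms

variable {R : Type*} [Ring R] [StarRing R]

/-- For `u = ψ(0)`, `u' = ψ'(0)`, `robinBoundary T a u u'` is `Γ₋ψ` and `robinBoundaryDual T u u'`
is `Γ₋°ψ`. -/
def robinBoundary (T a u u' : R) : R := (1 - T) * (u' - a * u) - T * u

def robinBoundaryDual (T u u' : R) : R := (1 - T) * u + T * u'

theorem star_robinBoundaryDual_mul_robinBoundary_sub {T a : R} (hT : IsStarProjection T)
    (ha : IsSelfAdjoint a) (hTa : T * a = 0) (u u' v v' : R) :
    star (robinBoundaryDual T v v') * robinBoundary T a u u' -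
        star (robinBoundary T a v v') * robinBoundaryDual T u u' =
      star v * u' - star v' * u := by
  have haT : a * T = 0 := by
    simpa [ha.star_eq, hT.isSelfAdjoint.star_eq] using congrArg star hTa
  have hTT (X : R) : T * (T * X) = T * X := by rw [← mul_assoc, hT.isIdempotentElem.eq]
  have hTaX (X : R) : T * (a * X) = 0 := by rw [← mul_assoc, hTa, zero_mul]
  have haTX (X : R) : a * (T * X) = 0 := by rw [← mul_assoc, haT, zero_mul]
  simp only [robinBoundary, robinBoundaryDual, star_add, star_sub, star_mul,
    hT.isSelfAdjoint.star_eq, ha.star_eq, star_zero, mul_add, add_mul, mul_sub, sub_mul, one_mul,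
    mul_assoc, hTT, hTaX, haTX, mul_zero, zero_mul]
  abel

theorem star_one_sub_mul_sub_star_mul_one_sub_eq_zero {T b : R} (hT : IsStarProjection T)
    (hb : IsSelfAdjoint b) :
    star (1 - T) * (T - b * (1 - T)) - star (T - b * (1 - T)) * (1 - T) = 0 := by
  simp only [star_sub, star_mul, star_one, hT.isSelfAdjoint.star_eq, hb.star_eq, mul_sub,
    sub_mul, one_mul, mul_one, mul_assoc, hT.one_sub_mul_self, hT.isIdempotentElem.eq]
  abel

end BoundaryForms

section Wronskian

variable {m l p : Type*} [Fintype m]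

theorem hasDerivAt_conjTranspose_mul_apply_s15 {F : ℝ → Matrix m l ℂ} {G : ℝ → Matrix m p ℂ}
    {F' : Matrix m l ℂ} {G' : Matrix m p ℂ} {x : ℝ}
    (hF : ∀ i j, HasDerivAt (fun t => F t i j) (F' i j) x)
    (hG : ∀ i j, HasDerivAt (fun t => G t i j) (G' i j) x) (i : l) (j : p) :
    HasDerivAt (fun t => ((F t)ᴴ * G t) i j) ((F'ᴴ * G x + (F x)ᴴ * G') i j) x := by
  simp only [mul_apply, conjTranspose_apply, Matrix.add_apply, ← Finset.sum_add_distrib]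
  exact HasDerivAt.fun_sum fun k _ => (hF k i).star.mul (hG k j)

def wronskian (F F' : ℝ → Matrix m l ℂ) (G G' : ℝ → Matrix m p ℂ) (x : ℝ) : Matrix l p ℂ :=
  (F x)ᴴ * G' x - (F' x)ᴴ * G x

theorem hasDerivAt_wronskian_apply {F F' F'' : ℝ → Matrix m l ℂ} {G G' G'' : ℝ → Matrix m p ℂ}
    {x : ℝ} (hF : ∀ i j, HasDerivAt (fun t => F t i j) (F' x i j) x)
    (hF' : ∀ i j, HasDerivAt (fun t => F' t i j) (F'' x i j) x)
    (hG : ∀ i j, HasDerivAt (fun t => G t i j) (G' x i j) x)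
    (hG' : ∀ i j, HasDerivAt (fun t => G' t i j) (G'' x i j) x) (i : l) (j : p) :
    HasDerivAt (fun t => wronskian F F' G G' t i j) (((F x)ᴴ * G'' x - (F'' x)ᴴ * G x) i j) x := by
  refine ((hasDerivAt_conjTranspose_mul_apply_s15 hF hG' i j).sub
    (hasDerivAt_conjTranspose_mul_apply_s15 hF' hG i j)).congr_deriv ?_
  simp only [Matrix.sub_apply, Matrix.add_apply]
  ring

theorem wronskian_eq_of_conjTranspose_mul_eq {F F' F'' : ℝ → Matrix m l ℂ}
    {G G' G'' : ℝ → Matrix m p ℂ} {a b : ℝ} (hab : a ≤ b)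
    (hF : ∀ x ∈ Icc a b, ∀ i j, HasDerivAt (fun t => F t i j) (F' x i j) x)
    (hF' : ∀ x ∈ Icc a b, ∀ i j, HasDerivAt (fun t => F' t i j) (F'' x i j) x)
    (hG : ∀ x ∈ Icc a b, ∀ i j, HasDerivAt (fun t => G t i j) (G' x i j) x)
    (hG' : ∀ x ∈ Icc a b, ∀ i j, HasDerivAt (fun t => G' t i j) (G'' x i j) x)
    (h : ∀ x ∈ Icc a b, (F x)ᴴ * G'' x = (F'' x)ᴴ * G x) :
    wronskian F F' G G' b = wronskian F F' G G' a := by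
  ext i j
  have hderiv (x : ℝ) (hx : x ∈ Icc a b) : HasDerivAt (fun t => wronskian F F' G G' t i j) 0 x := by
    simpa [h x hx] using
      hasDerivAt_wronskian_apply (hF x hx) (hF' x hx) (hG x hx) (hG' x hx) i j
  exact constant_of_has_deriv_right_zero
    (fun x hx => (hderiv x hx).continuousAt.continuousWithinAt)
    (fun x hx => (hderiv x (Ico_subset_Icc_self hx)).hasDerivWithinAt) b (right_mem_Icc.2 hab)

end Wronskian

theorem conjTranspose_mul_eq_of_schrodinger {n l p α : Type*} [Fintype n] [CommRing α]
    [StarRing α] {V : Matrix n n α} {F F'' : Matrix n l α} {G G'' : Matrix n p α} {μ ν : α}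
    (hV : Vᴴ = V) (hμν : star μ = ν) (hF : -F'' + V * F = μ • F) (hG : -G'' + V * G = ν • G) :
    Fᴴ * G'' = F''ᴴ * G := by
  have hF'' : F'' = V * F - μ • F := by rw [← hF]; abel
  have hG'' : G'' = V * G - ν • G := by rw [← hG]; abel
  rw [hF'', hG'', conjTranspose_sub, conjTranspose_mul, conjTranspose_smul, hV, hμν,
    Matrix.mul_sub, Matrix.sub_mul, Matrix.mul_smul, Matrix.smul_mul, Matrix.mul_assoc]

theorem Matrix.mul_nonsing_inv_eq_conjTranspose_of_conjTranspose_mul_eq {n α : Type*}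
    [Fintype n] [DecidableEq n] [CommRing α] [StarRing α] {A B C D : Matrix n n α}
    (hB : IsUnit B) (hD : IsUnit D) (h : Cᴴ * B = Dᴴ * A) : C * D⁻¹ = (A * B⁻¹)ᴴ := by
  have hB' : IsUnit Bᴴ.det := (isUnit_iff_isUnit_det _).mp ((isUnit_conjTranspose B).mpr hB)
  have h' : Bᴴ * C = Aᴴ * D := by
    simpa only [conjTranspose_mul, conjTranspose_conjTranspose] using congrArg conjTranspose h
  calc C * D⁻¹ = Bᴴ⁻¹ * (Bᴴ * C) * D⁻¹ := by rw [nonsing_inv_mul_cancel_left _ _ hB']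
    _ = Bᴴ⁻¹ * Aᴴ * D * D⁻¹ := by rw [h', ← mul_assoc]
    _ = Bᴴ⁻¹ * Aᴴ := mul_nonsing_inv_cancel_right _ _ ((isUnit_iff_isUnit_det _).mp hD)
    _ = (A * B⁻¹)ᴴ := by rw [conjTranspose_mul, conjTranspose_nonsing_inv]

theorem weyl_titchmarsh_symmetry_general {N : ℕ}
    (Tm Tp a b : Matrix (Fin N) (Fin N) ℂ)
    (hTmH : Tmᴴ = Tm) (hTm2 : Tm * Tm = Tm) (hTpH : Tpᴴ = Tp) (hTp2 : Tp * Tp = Tp)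
    (haH : aᴴ = a) (ha : a = (1 - Tm) * a * (1 - Tm))
    (hbH : bᴴ = b)
    (V : ℝ → Matrix (Fin N) (Fin N) ℂ)
    (hVh : ∀ x ∈ Icc (0:ℝ) 1, (V x)ᴴ = V x)
    (Fp Fp' Fp'' : ℝ → ℂ → Matrix (Fin N) (Fin N) ℂ)
    (hFp' : ∀ lam : ℂ, ∀ x ∈ Icc (0:ℝ) 1, ∀ i j,
      HasDerivAt (fun t => Fp t lam i j) (Fp' x lam i j) x)
    (hFp'' : ∀ lam : ℂ, ∀ x ∈ Icc (0:ℝ) 1, ∀ i j,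
      HasDerivAt (fun t => Fp' t lam i j) (Fp'' x lam i j) x)
    (hFpeq : ∀ lam : ℂ, ∀ x ∈ Icc (0:ℝ) 1,
      -Fp'' x lam + V x * Fp x lam = lam • Fp x lam)
    (hFp1 : ∀ lam : ℂ, Fp 1 lam = 1 - Tp)
    (hFp'1 : ∀ lam : ℂ, Fp' 1 lam = Tp - b * (1 - Tp)) :
    ∀ lam : ℂ,
      (((1 - Tm) * Fp 0 ((starRingEnd ℂ) lam) + Tm * Fp' 0 ((starRingEnd ℂ) lam))ᴴ *
          ((1 - Tm) * (Fp' 0 lam - a * Fp 0 lam) - Tm * Fp 0 lam) =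
        ((1 - Tm) * (Fp' 0 ((starRingEnd ℂ) lam) - a * Fp 0 ((starRingEnd ℂ) lam)) -
            Tm * Fp 0 ((starRingEnd ℂ) lam))ᴴ *
          ((1 - Tm) * Fp 0 lam + Tm * Fp' 0 lam)) ∧
      (IsUnit ((1 - Tm) * (Fp' 0 lam - a * Fp 0 lam) - Tm * Fp 0 lam) →
        IsUnit ((1 - Tm) * (Fp' 0 ((starRingEnd ℂ) lam) - a * Fp 0 ((starRingEnd ℂ) lam)) -
          Tm * Fp 0 ((starRingEnd ℂ) lam)) →
        -(((1 - Tm) * Fp 0 ((starRingEnd ℂ) lam) + Tm * Fp' 0 ((starRingEnd ℂ) lam)) *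
            ((1 - Tm) * (Fp' 0 ((starRingEnd ℂ) lam) - a * Fp 0 ((starRingEnd ℂ) lam)) -
              Tm * Fp 0 ((starRingEnd ℂ) lam))⁻¹) =
          (-(((1 - Tm) * Fp 0 lam + Tm * Fp' 0 lam) *
            ((1 - Tm) * (Fp' 0 lam - a * Fp 0 lam) - Tm * Fp 0 lam)⁻¹))ᴴ) := by
  intro lam
  set μ := starRingEnd ℂ lam
  have hTm : IsStarProjection Tm := ⟨hTm2, hTmH⟩
  have hTma : Tm * a = 0 := by
    rw [ha, ← mul_assoc, ← mul_assoc, hTm.mul_one_sub_self, zero_mul, zero_mul]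
  have hW1 : wronskian (Fp · μ) (Fp' · μ) (Fp · lam) (Fp' · lam) 1 = 0 := by
    rw [wronskian, hFp1, hFp'1, hFp1, hFp'1]
    exact star_one_sub_mul_sub_star_mul_one_sub_eq_zero ⟨hTp2, hTpH⟩ hbH
  have hW0 : wronskian (Fp · μ) (Fp' · μ) (Fp · lam) (Fp' · lam) 0 = 0 := by
    rw [← hW1]
    refine (wronskian_eq_of_conjTranspose_mul_eq zero_le_one (hFp' μ) (hFp'' μ) (hFp' lam)
      (hFp'' lam) fun x hx => ?_).symm
    exact conjTranspose_mul_eq_of_schrodinger (hVh x hx) (Complex.conj_conj lam)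
      (hFpeq μ x hx) (hFpeq lam x hx)
  have hsym := sub_eq_zero.mp ((star_robinBoundaryDual_mul_robinBoundary_sub hTm haH hTma
    (Fp 0 lam) (Fp' 0 lam) (Fp 0 μ) (Fp' 0 μ)).trans hW0)
  refine ⟨hsym, fun hU hU' => ?_⟩
  rw [conjTranspose_neg, neg_inj]
  exact mul_nonsing_inv_eq_conjTranspose_of_conjTranspose_mul_eq hU hU' hsym

/-- For the family `F₊(·,λ)` of fundamental solutions normalized at `x = 1`,
one has `(Γ₋°F₊(·,conj λ))ᴴ (Γ₋F₊(·,λ)) = (Γ₋F₊(·,conj λ))ᴴ (Γ₋°F₊(·,λ))`; hence the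
Weyl–Titchmarsh function `m(λ) = -(Γ₋°F₊(·,λ))(Γ₋F₊(·,λ))⁻¹` satisfies `m(conj λ) = m(λ)ᴴ`
whenever the relevant matrices are invertible. -/
theorem weyl_titchmarsh_symmetry {N : ℕ} (hN : 1 ≤ N)
    (Tm Tp a b : Matrix (Fin N) (Fin N) ℂ)
    (hTmH : Tmᴴ = Tm) (hTm2 : Tm * Tm = Tm) (hTpH : Tpᴴ = Tp) (hTp2 : Tp * Tp = Tp)
    (haH : aᴴ = a) (ha : a = (1 - Tm) * a * (1 - Tm))
    (hbH : bᴴ = b) (hb : b = (1 - Tp) * b * (1 - Tp))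
    (V : ℝ → Matrix (Fin N) (Fin N) ℂ)
    (hVc : ∀ i j, Continuous fun x => V x i j)
    (hVh : ∀ x ∈ Icc (0:ℝ) 1, (V x)ᴴ = V x)
    (Fp Fp' Fp'' : ℝ → ℂ → Matrix (Fin N) (Fin N) ℂ)
    (hFp' : ∀ lam : ℂ, ∀ x ∈ Icc (0:ℝ) 1, ∀ i j,
      HasDerivAt (fun t => Fp t lam i j) (Fp' x lam i j) x)
    (hFp'' : ∀ lam : ℂ, ∀ x ∈ Icc (0:ℝ) 1, ∀ i j,
      HasDerivAt (fun t => Fp' t lam i j) (Fp'' x lam i j) x)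
    (hFp''c : ∀ lam : ℂ, ∀ i j, ContinuousOn (fun x => Fp'' x lam i j) (Icc (0:ℝ) 1))
    (hFpeq : ∀ lam : ℂ, ∀ x ∈ Icc (0:ℝ) 1,
      -Fp'' x lam + V x * Fp x lam = lam • Fp x lam)
    (hFp1 : ∀ lam : ℂ, Fp 1 lam = 1 - Tp)
    (hFp'1 : ∀ lam : ℂ, Fp' 1 lam = Tp - b * (1 - Tp)) :
    ∀ lam : ℂ,
      (((1 - Tm) * Fp 0 ((starRingEnd ℂ) lam) + Tm * Fp' 0 ((starRingEnd ℂ) lam))ᴴ *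
          ((1 - Tm) * (Fp' 0 lam - a * Fp 0 lam) - Tm * Fp 0 lam) =
        ((1 - Tm) * (Fp' 0 ((starRingEnd ℂ) lam) - a * Fp 0 ((starRingEnd ℂ) lam)) -
            Tm * Fp 0 ((starRingEnd ℂ) lam))ᴴ *
          ((1 - Tm) * Fp 0 lam + Tm * Fp' 0 lam)) ∧
      (IsUnit ((1 - Tm) * (Fp' 0 lam - a * Fp 0 lam) - Tm * Fp 0 lam) →
        IsUnit ((1 - Tm) * (Fp' 0 ((starRingEnd ℂ) lam) - a * Fp 0 ((starRingEnd ℂ) lam)) -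
          Tm * Fp 0 ((starRingEnd ℂ) lam)) →
        -(((1 - Tm) * Fp 0 ((starRingEnd ℂ) lam) + Tm * Fp' 0 ((starRingEnd ℂ) lam)) *
            ((1 - Tm) * (Fp' 0 ((starRingEnd ℂ) lam) - a * Fp 0 ((starRingEnd ℂ) lam)) -
              Tm * Fp 0 ((starRingEnd ℂ) lam))⁻¹) =
          (-(((1 - Tm) * Fp 0 lam + Tm * Fp' 0 lam) *
            ((1 - Tm) * (Fp' 0 lam - a * Fp 0 lam) - Tm * Fp 0 lam)⁻¹))ᴴ) :=
  weyl_titchmarsh_symmetry_general Tm Tp a b hTmH hTm2 hTpH hTp2 haH ha hbH V hVh Fp Fp' Fp'' hFp'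
    hFp'' hFpeq hFp1 hFp'1
end
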